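/- For the GFBST with cutoff c < 0.5: if H is accepted (ev(Θ∖H|x) ≤ c), then P(H|x) ≥ 1−c, hence P(H|x) > c, and hence H is possible under the GFBST (ev(H|x) > c). -/

import Mathlib

/-! Since `T(Hᶜ) ⊆ H`, acceptance gives `P H ≥ P(T(Hᶜ)) ≥ 1 - c > c`. In particular `T(Hᶜ)` is
nonempty, and a point of `T(H) ⊆ Hᶜ` would have to score both above and below a point of `T(Hᶜ)`;
so `T(H) = ∅` and `ev H = 1 > c`. -/

open MeasureTheory

def tangentSet {Θ : Type*} (s : Θ → ℝ) (H : Set Θ) : Set Θ :=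
  {θ₁ | ∀ θ₀ ∈ H, s θ₁ > s θ₀}

noncomputable def ev {Θ : Type*} [MeasurableSpace Θ] (P : Measure Θ) (s : Θ → ℝ)
    (H : Set Θ) : ENNReal :=
  1 - P (tangentSet s H)

section Tangent

variable {Θ : Type*} (s : Θ → ℝ) (H : Set Θ)

lemma tangentSet_subset_compl : tangentSet s H ⊆ Hᶜ :=
  fun θ hθ hθH => lt_irrefl _ (hθ θ hθH)

lemma tangentSet_compl_subset : tangentSet s Hᶜ ⊆ H := by
  simpa using tangentSet_subset_compl s Hᶜ

lemma tangentSet_eq_empty_of_nonempty_compl (h : (tangentSet s Hᶜ).Nonempty) :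
    tangentSet s H = ∅ := by
  obtain ⟨θ₂, hθ₂⟩ := h
  refine Set.eq_empty_of_forall_notMem fun θ₁ hθ₁ => ?_
  have h₁₂ : s θ₂ < s θ₁ := hθ₁ θ₂ (tangentSet_compl_subset s H hθ₂)
  have h₂₁ : s θ₁ < s θ₂ := hθ₂ θ₁ (tangentSet_subset_compl s H hθ₁)
  exact lt_asymm h₁₂ h₂₁

variable [MeasurableSpace Θ] (P : Measure Θ)

lemma one_sub_ev_le : 1 - ev P s H ≤ P (tangentSet s H) :=
  tsub_tsub_le

lemma one_sub_ev_compl_le : 1 - ev P s Hᶜ ≤ P H :=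
  (one_sub_ev_le s Hᶜ P).trans (measure_mono (tangentSet_compl_subset s H))

lemma ev_eq_one_of_tangentSet_eq_empty (h : tangentSet s H = ∅) : ev P s H = 1 := by
  simp [ev, h]

end Tangent

lemma ENNReal.lt_one_sub_of_lt_half {c : ENNReal} (hc : c < 1 / 2) : c < 1 - c :=
  calc c < 1 / 2 := hc
    _ = 1 - 1 / 2 := by rw [one_div, ENNReal.one_sub_inv_two]
    _ ≤ 1 - c := tsub_le_tsub_left hc.le 1

theorem stmt_10_general {Θ : Type*} [MeasurableSpace Θ] (P : Measure Θ)
    (s : Θ → ℝ) (c : ENNReal) (hc : c < 1/2)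
    (H : Set Θ) (hacc : ev P s Hᶜ ≤ c) :
    P H ≥ 1 - c ∧ P H > c ∧ ev P s H > c := by
  have hc_lt : c < 1 - c := ENNReal.lt_one_sub_of_lt_half hc
  have h_le_ev : 1 - c ≤ 1 - ev P s Hᶜ := tsub_le_tsub_left hacc 1
  have hPH : 1 - c ≤ P H := h_le_ev.trans (one_sub_ev_compl_le s H P)
  have hT_pos : P (tangentSet s Hᶜ) ≠ 0 :=
    (pos_of_gt (hc_lt.trans_le (h_le_ev.trans (one_sub_ev_le s Hᶜ P)))).ne'
  have hT_empty : tangentSet s H = ∅ :=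
    tangentSet_eq_empty_of_nonempty_compl s H (nonempty_of_measure_ne_zero hT_pos)
  refine ⟨hPH, hc_lt.trans_le hPH, ?_⟩
  rw [ev_eq_one_of_tangentSet_eq_empty s H P hT_empty]
  exact hc_lt.trans_le tsub_le_self

theorem stmt_10 {Θ : Type*} [MeasurableSpace Θ] (P : Measure Θ) [IsProbabilityMeasure P]
    (s : Θ → ℝ) (c : ENNReal) (hc0 : 0 < c) (hc : c < 1/2)
    (H : Set Θ) (hacc : ev P s Hᶜ ≤ c) :
    P H ≥ 1 - c ∧ P H > c ∧ ev P s H > c :=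
  stmt_10_general P s c hc H hacc
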